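/- On every reflexive frame, the sequents ■p ⊢ p ∧ ▲p and p ∧ ▲p ⊢ ■p are valid. -/

import Mathlib

/-- Formulas of the language with ¬, ∧, ∨, □, ■, 𝐈 and ▲. -/
inductive Form : Type
  | var : ℕ → Form
  | neg : Form → Form
  | conj : Form → Form → Form
  | disj : Form → Form → Form
  | box : Form → Form
  | bbox : Form → Form
  | ign : Form → Form
  | tri : Form → Form

/-- A Kripke model for Belnap–Dunn modal logic. -/
structure Model (W : Type) where
  R : W → W → Prop
  vp : ℕ → W → Prop
  vn : ℕ → W → Prop

mutual
  /-- support of truth -/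
  def tr {W : Type} (M : Model W) : Form → W → Prop
    | .var n, w => M.vp n w
    | .neg φ, w => fa M φ w
    | .conj φ ψ, w => tr M φ w ∧ tr M ψ w
    | .disj φ ψ, w => tr M φ w ∨ tr M ψ w
    | .box φ, w => ∀ w', M.R w w' → tr M φ w'
    | .bbox φ, w => (∀ w', M.R w w' → tr M φ w') ∧
        ∀ w₁ w₂, M.R w w₁ → M.R w w₂ → fa M φ w₁ → fa M φ w₂
    | .ign φ, w => tr M φ w ∧ (∀ w', M.R w w' → w' ≠ w → fa M φ w') ∧
        ∀ w₁ w₂, M.R w w₁ → w₁ ≠ w → M.R w w₂ → w₂ ≠ w → tr M φ w₁ → tr M φ w₂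
    | .tri φ, w => (∀ w₁ w₂, M.R w w₁ → M.R w w₂ →
          (tr M φ w₁ → tr M φ w₂) ∧ (fa M φ w₁ → fa M φ w₂)) ∧
        ∀ w', M.R w w' → tr M φ w' ∨ fa M φ w'
  /-- support of falsity -/
  def fa {W : Type} (M : Model W) : Form → W → Prop
    | .var n, w => M.vn n w
    | .neg φ, w => tr M φ w
    | .conj φ ψ, w => fa M φ w ∨ fa M ψ w
    | .disj φ ψ, w => fa M φ w ∧ fa M ψ w
    | .box φ, w => ∃ w', M.R w w' ∧ fa M φ w'
    | .bbox φ, w => (∃ w', M.R w w' ∧ fa M φ w') ∨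
        ∃ w₁ w₂, M.R w w₁ ∧ M.R w w₂ ∧ tr M φ w₁ ∧ ¬ tr M φ w₂
    | .ign φ, w => fa M φ w ∨ (∃ w', M.R w w' ∧ w' ≠ w ∧ tr M φ w') ∨
        ∃ w₁ w₂, (M.R w w₁ ∧ w₁ ≠ w) ∧ (M.R w w₂ ∧ w₂ ≠ w) ∧ ¬ fa M φ w₁ ∧ fa M φ w₂
    | .tri φ, w => (∃ w₁ w₂, M.R w w₁ ∧ M.R w w₂ ∧ tr M φ w₁ ∧ ¬ tr M φ w₂) ∨
        (∃ w₁ w₂, M.R w w₁ ∧ M.R w w₂ ∧ fa M φ w₁ ∧ ¬ fa M φ w₂) ∨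
        (∃ w₁ w₂, M.R w w₁ ∧ M.R w w₂ ∧ tr M φ w₁ ∧ fa M φ w₂)
end

/-- φ contains an occurrence of □ -/
def hasBox : Form → Prop
  | .var _ => False
  | .neg φ => hasBox φ
  | .conj φ ψ => hasBox φ ∨ hasBox ψ
  | .disj φ ψ => hasBox φ ∨ hasBox ψ
  | .box _ => True
  | .bbox φ => hasBox φ
  | .ign φ => hasBox φ
  | .tri φ => hasBox φ

/-- φ contains an occurrence of ■ -/
def hasBBox : Form → Prop
  | .var _ => False
  | .neg φ => hasBBox φ
  | .conj φ ψ => hasBBox φ ∨ hasBBox ψ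
  | .disj φ ψ => hasBBox φ ∨ hasBBox ψ
  | .box φ => hasBBox φ
  | .bbox _ => True
  | .ign φ => hasBBox φ
  | .tri φ => hasBBox φ

/-- φ contains an occurrence of 𝐈 -/
def hasIgn : Form → Prop
  | .var _ => False
  | .neg φ => hasIgn φ
  | .conj φ ψ => hasIgn φ ∨ hasIgn ψ
  | .disj φ ψ => hasIgn φ ∨ hasIgn ψ
  | .box φ => hasIgn φ
  | .bbox φ => hasIgn φ
  | .ign _ => True
  | .tri φ => hasIgn φ

/-- φ contains an occurrence of ▲ -/
def hasTri : Form → Prop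
  | .var _ => False
  | .neg φ => hasTri φ
  | .conj φ ψ => hasTri φ ∨ hasTri ψ
  | .disj φ ψ => hasTri φ ∨ hasTri ψ
  | .box φ => hasTri φ
  | .bbox φ => hasTri φ
  | .ign φ => hasTri φ
  | .tri _ => True

/-- validity of the sequent φ ⊢ χ on the frame (W,R) -/
def validOn {W : Type} (R : W → W → Prop) (φ χ : Form) : Prop :=
  ∀ (vp vn : ℕ → W → Prop) (w : W), tr ⟨R, vp, vn⟩ φ w → tr ⟨R, vp, vn⟩ χ w

/-- ♦φ := ¬■¬φ -/
def dia (φ : Form) : Form := .neg (.bbox (.neg φ))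

section Semantics

variable {W : Type} (M : Model W) (φ : Form) {w : W}

theorem tr_tri_of_tr_bbox (h : tr M (.bbox φ) w) : tr M (.tri φ) w := by
  obtain ⟨hall, hfa⟩ := h
  exact ⟨fun w₁ w₂ h₁ h₂ => ⟨fun _ => hall w₂ h₂, hfa w₁ w₂ h₁ h₂⟩,
    fun w' hw' => .inl (hall w' hw')⟩

variable {M φ}

theorem tr_bbox_iff_of_refl (hw : M.R w w) :
    tr M (.bbox φ) w ↔ tr M φ w ∧ tr M (.tri φ) w := by
  refine ⟨fun h => ⟨h.1 w hw, tr_tri_of_tr_bbox M φ h⟩, ?_⟩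
  -- `w` is one of its own successors, so ▲'s agreement on truth spreads `φ` from `w` to all of them.
  rintro ⟨hφ, hagree, -⟩
  exact ⟨fun w' hw' => (hagree w w' hw hw').1 hφ, fun w₁ w₂ h₁ h₂ => (hagree w₁ w₂ h₁ h₂).2⟩

end Semantics

/-- on reflexive frames, ■p ⊣⊢ p ∧ ▲p. -/
theorem bbox_iff_conj_tri_on_reflexive {W : Type} [Nonempty W]
    (R : W → W → Prop) (hrefl : ∀ w, R w w) :
    validOn R (.bbox (.var 0)) (.conj (.var 0) (.tri (.var 0))) ∧
    validOn R (.conj (.var 0) (.tri (.var 0))) (.bbox (.var 0)) :=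
  ⟨fun _ _ w => (tr_bbox_iff_of_refl (hrefl w)).mp,
    fun _ _ w => (tr_bbox_iff_of_refl (hrefl w)).mpr⟩
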